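/- Fix k ≥ 3, let S = ⟨2k+1, 6k-5, 6k-1⟩, and for 0 ≤ j ≤ k-2 set s_j = 6k² + (6j+1)k - 5j - 5. Then the catenary degree of s_j equals 3k - 3 - j. -/

import Mathlib

/-- The set of factorizations of `n` over the generators `gens`. -/
def Zset {k : ℕ} (gens : Fin k → ℕ) (n : ℕ) : Set (Fin k → ℕ) :=
  {a | ∑ i, a i * gens i = n}

/-- The length of a factorization. -/
def flen {k : ℕ} (a : Fin k → ℕ) : ℕ := ∑ i, a i

/-- The distance between two factorizations:
`max (|a - gcd(a,b)|, |b - gcd(a,b)|)` (componentwise gcd = min). -/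
def fdist {k : ℕ} (a b : Fin k → ℕ) : ℕ :=
  max (∑ i, (a i - b i)) (∑ i, (b i - a i))

/-- There is an `N`-chain of factorizations within `Z` from `a` to `b`. -/
def IsNChain {k : ℕ} (Z : Set (Fin k → ℕ)) (N : ℕ) (a b : Fin k → ℕ) : Prop :=
  ∃ l : List (Fin k → ℕ), l.head? = some a ∧ l.getLast? = some b ∧
    (∀ x ∈ l, x ∈ Z) ∧ l.Chain' (fun x y => fdist x y ≤ N)

/-- The catenary degree of `n`: the least `N` such that any two factorizations
of `n` are connected by an `N`-chain. -/
noncomputable def catDeg {k : ℕ} (gens : Fin k → ℕ) (n : ℕ) : ℕ :=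
  sInf {N | ∀ a ∈ Zset gens n, ∀ b ∈ Zset gens n, IsNChain (Zset gens n) N a b}

/-- `n` is a Betti element: the graph on `Z(n)` joining factorizations with
nonzero componentwise gcd is disconnected. -/
def IsBetti {k : ℕ} (gens : Fin k → ℕ) (n : ℕ) : Prop :=
  ∃ a ∈ Zset gens n, ∃ b ∈ Zset gens n,
    ¬ Relation.ReflTransGen
      (fun x y => x ∈ Zset gens n ∧ y ∈ Zset gens n ∧ ∃ i, min (x i) (y i) ≠ 0) a b

/-- The set of catenary degrees of elements of the monoid generated by `gens`. -/
def CatSet {k : ℕ} (gens : Fin k → ℕ) : Set ℕ :=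
  {c | ∃ n, (Zset gens n).Nonempty ∧ catDeg gens n = c}

/-!
Since `s_j = (k+1+j)(6k-5)`, the factorizations of `s_j` are `z = (0, k+1+j, 0)` and
`w_m = (3k-4-3m, j-m, 2m+1)` for `0 ≤ m ≤ j`. Consecutive `w_m` differ by `(3, 1, -2)`, so they
are at distance `4`, whereas `d(z, w_m) = 3k-3-m` is smallest for `m = j`. Hence every chain
leaving `z` has a step of length at least `3k-3-j`, and the single step `z → w_j` together with
the `4`-chain through the `w_m` connects everything.
-/

section Chains

variable {r : ℕ} {Z : Set (Fin r → ℕ)} {N : ℕ} {a b c : Fin r → ℕ}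

theorem fdist_comm (a b : Fin r → ℕ) : fdist a b = fdist b a := max_comm _ _

theorem fdist_self (a : Fin r → ℕ) : fdist a a = 0 := by
  simp [fdist]

theorem IsNChain.refl (ha : a ∈ Z) : IsNChain Z N a a :=
  ⟨[a], rfl, rfl, by simpa using ha, List.isChain_singleton a⟩

theorem IsNChain.of_fdist_le (ha : a ∈ Z) (hb : b ∈ Z) (hab : fdist a b ≤ N) :
    IsNChain Z N a b :=
  ⟨[a, b], rfl, rfl, by simp [ha, hb], List.isChain_pair.mpr hab⟩

theorem IsNChain.symm (h : IsNChain Z N a b) : IsNChain Z N b a := by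
  obtain ⟨l, hhead, hlast, hmem, hchain⟩ := h
  refine ⟨l.reverse, by simpa using hlast, by simpa using hhead, by simpa using hmem, ?_⟩
  rw [List.Chain', List.isChain_reverse]
  exact hchain.imp fun x y hxy => by rwa [fdist_comm]

theorem IsNChain.trans (hab : IsNChain Z N a b) (hbc : IsNChain Z N b c) :
    IsNChain Z N a c := by
  obtain ⟨l, hhead, hlast, hmem, hchain⟩ := hab
  obtain ⟨l', hhead', hlast', hmem', hchain'⟩ := hbc
  have hl : l ≠ [] := by rintro rfl; simp at hhead
  have hl' : l' ≠ [] := by rintro rfl; simp at hhead'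
  refine ⟨l ++ l', by rwa [List.head?_append_of_ne_nil _ hl],
    by rwa [List.getLast?_append_of_ne_nil _ hl'], ?_, ?_⟩
  · simpa [or_imp, forall_and] using ⟨hmem, hmem'⟩
  · rw [List.Chain', List.isChain_append]
    refine ⟨hchain, hchain', fun x hx y hy => ?_⟩
    rw [hlast, Option.mem_some_iff] at hx
    rw [hhead', Option.mem_some_iff] at hy
    simp [← hx, ← hy, fdist_self]

theorem IsNChain.of_fdist_succ_le {f : ℕ → Fin r → ℕ} {p : ℕ} (hmem : ∀ m ≤ p, f m ∈ Z)
    (hstep : ∀ m < p, fdist (f m) (f (m + 1)) ≤ N) {m : ℕ} (hm : m ≤ p) :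
    IsNChain Z N (f m) (f p) := by
  induction hm using Nat.decreasingInduction with
  | self => exact .refl (hmem p le_rfl)
  | of_succ m hm ih => exact (of_fdist_le (hmem m hm.le) (hmem _ hm) (hstep m hm)).trans ih

theorem IsNChain.exists_fdist_le_of_ne (h : IsNChain Z N a b) (hba : b ≠ a) :
    ∃ y ∈ Z, y ≠ a ∧ fdist a y ≤ N := by
  obtain ⟨l, hhead, hlast, hmem, hchain⟩ := h
  induction l with
  | nil => simp at hhead
  | cons x t ih =>
    obtain rfl : x = a := by simpa using hhead
    cases t with
    | nil => exact absurd (by simpa using hlast.symm) hba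
    | cons y t =>
      obtain ⟨hxy, hyt⟩ := List.isChain_cons_cons.mp hchain
      by_cases hy : y = x
      · subst hy
        exact ih rfl (by simpa using hlast) (fun z hz => hmem z (.tail _ hz)) hyt
      · exact ⟨y, hmem y (by simp), hy, hxy⟩

end Chains

theorem catDeg_eq_of_isolated {r : ℕ} {gens : Fin r → ℕ} {n N : ℕ} {a b : Fin r → ℕ}
    (hchain : ∀ x ∈ Zset gens n, ∀ y ∈ Zset gens n, IsNChain (Zset gens n) N x y)
    (ha : a ∈ Zset gens n) (hb : b ∈ Zset gens n) (hba : b ≠ a)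
    (hfar : ∀ y ∈ Zset gens n, y ≠ a → N ≤ fdist a y) :
    catDeg gens n = N := by
  refine le_antisymm (Nat.sInf_le hchain) (le_csInf ⟨N, hchain⟩ fun M hM => ?_)
  obtain ⟨y, hy, hya, hay⟩ := (hM a ha b hb).exists_fdist_le_of_ne hba
  exact (hfar y hy hya).trans hay

theorem fdist_three (a b : Fin 3 → ℕ) :
    fdist a b =
      max (a 0 - b 0 + (a 1 - b 1) + (a 2 - b 2)) (b 0 - a 0 + (b 1 - a 1) + (b 2 - a 2)) := by
  simp [fdist, Fin.sum_univ_three]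

def gensS (k : ℕ) : Fin 3 → ℕ := ![2 * k + 1, 6 * k - 5, 6 * k - 1]

def sj (k j : ℕ) : ℕ := 6 * k ^ 2 + (6 * j + 1) * k - 5 * j - 5

def zFact (k j : ℕ) : Fin 3 → ℕ := ![0, k + 1 + j, 0]

def wFact (k j m : ℕ) : Fin 3 → ℕ := ![3 * k - 4 - 3 * m, j - m, 2 * m + 1]

theorem sj_eq_mul (k j : ℕ) : sj k j = (k + 1 + j) * (6 * k - 5) := by
  rcases k with _ | k
  · simp [sj]
  · simp only [sj, Nat.sub_sub]
    zify [(by nlinarith : 5 * j + 5 ≤ 6 * (k + 1) ^ 2 + (6 * j + 1) * (k + 1)),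
      (by omega : 5 ≤ 6 * (k + 1))]
    ring

theorem factorization_sj_cases {k j A B C : ℕ} (hj : j < k)
    (h : A * (2 * k + 1) + B * (6 * k - 5) + C * (6 * k - 1) = (k + 1 + j) * (6 * k - 5)) :
    (A = 0 ∧ B = k + 1 + j ∧ C = 0) ∨
      ∃ m ≤ j, A + 3 * m + 4 = 3 * k ∧ B + m = j ∧ C = 2 * m + 1 := by
  suffices (A = 0 ∧ B = k + 1 + j ∧ C = 0) ∨
      (B ≤ j ∧ A + 3 * (j - B) + 4 = 3 * k ∧ C = 2 * (j - B) + 1) by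
    rcases this with h | ⟨hB, hA, hC⟩
    exacts [.inl h, .inr ⟨j - B, by omega, hA, by omega, hC⟩]
  zify [(by omega : 5 ≤ 6 * k), (by omega : 1 ≤ 6 * k)] at h
  -- With `q = 2k+1` one has `6k-5 = 3q-8` and `6k-1 = 3q-4`.
  have key : ((A : ℤ) + 3 * B + 3 * C - 3 * (k + 1 + j)) * (2 * k + 1)
      = 4 * (2 * B + C - 2 * (k + 1 + j)) := by
    linear_combination h
  have hBC : 2 * (B : ℤ) + C ≤ 2 * (k + 1 + j) := by
    nlinarith
  obtain ⟨E, hE⟩ : ∃ E : ℤ, E = A + 3 * B + 3 * C - 3 * (k + 1 + j) := ⟨_, rfl⟩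
  rw [← hE] at key
  have hE_nonpos : E ≤ 0 := by nlinarith
  have hE_gt : -8 < E := by nlinarith
  -- Once `E` is a numeral, `key` is linear; parity rules out odd `E` and `E = -2, -6`.
  interval_cases E <;> omega

theorem mem_Zset_sj_iff {k j : ℕ} (hj : j + 2 ≤ k) {a : Fin 3 → ℕ} :
    a ∈ Zset (gensS k) (sj k j) ↔ a = zFact k j ∨ ∃ m ≤ j, a = wFact k j m := by
  simp only [Zset, Set.mem_ofPred_eq, Fin.sum_univ_three, gensS, sj_eq_mul,
    Matrix.cons_val_zero, Matrix.cons_val_one, Matrix.cons_val_two, Matrix.head_cons,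
    Matrix.tail_cons]
  constructor
  · intro h
    rcases factorization_sj_cases (by omega) h with
      ⟨hA, hB, hC⟩ | ⟨m, hm, hA, hB, hC⟩
    · left
      ext i; fin_cases i <;> simp [zFact, hA, hB, hC]
    · right
      refine ⟨m, hm, ?_⟩
      ext i; fin_cases i <;> simp [wFact] <;> omega
  · rintro (rfl | ⟨m, hm, rfl⟩)
    · simp [zFact]
    · simp only [wFact, Matrix.cons_val_zero, Matrix.cons_val_one, Matrix.cons_val_two,
        Matrix.head_cons, Matrix.tail_cons]
      zify [(by omega : 4 + 3 * m ≤ 3 * k), hm, (by omega : 5 ≤ 6 * k), (by omega : 1 ≤ 6 * k),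
        Nat.sub_sub]
      ring

theorem fdist_wFact_succ {k j m : ℕ} (hj : j + 2 ≤ k) (hm : m < j) :
    fdist (wFact k j m) (wFact k j (m + 1)) = 4 := by
  simp [fdist_three, wFact]
  omega

theorem fdist_zFact_wFact {k j m : ℕ} (hm : m ≤ j) (hmk : m + 2 ≤ k) :
    fdist (zFact k j) (wFact k j m) = 3 * k - 3 - m := by
  simp [fdist_three, zFact, wFact]
  omega

theorem isNChain_wFact_of_mem {k j : ℕ} (hj : j + 2 ≤ k) {a : Fin 3 → ℕ}
    (ha : a ∈ Zset (gensS k) (sj k j)) :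
    IsNChain (Zset (gensS k) (sj k j)) (3 * k - 3 - j) a (wFact k j j) := by
  have hw : ∀ m ≤ j, wFact k j m ∈ Zset (gensS k) (sj k j) :=
    fun m hm => (mem_Zset_sj_iff hj).mpr (.inr ⟨m, hm, rfl⟩)
  rcases (mem_Zset_sj_iff hj).mp ha with rfl | ⟨m, hm, rfl⟩
  · exact .of_fdist_le ha (hw j le_rfl) (fdist_zFact_wFact le_rfl hj).le
  · exact .of_fdist_succ_le hw (fun m hm => by rw [fdist_wFact_succ hj hm]; omega) hm

/-- For k ≥ 3, 0 ≤ j ≤ k-2 and s_j = 6k² + (6j+1)k - 5j - 5, the catenary degree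
of s_j in S = ⟨2k+1, 6k-5, 6k-1⟩ equals 3k - 3 - j. -/
theorem catDeg_of_sj (k j : ℕ) (hk : 3 ≤ k) (hj : j ≤ k - 2) :
    catDeg ![2 * k + 1, 6 * k - 5, 6 * k - 1]
        (6 * k ^ 2 + (6 * j + 1) * k - 5 * j - 5) = 3 * k - 3 - j := by
  have hjk : j + 2 ≤ k := by omega
  change catDeg (gensS k) (sj k j) = _
  have hz : zFact k j ∈ Zset (gensS k) (sj k j) := (mem_Zset_sj_iff hjk).mpr (.inl rfl)
  have hw : wFact k j j ∈ Zset (gensS k) (sj k j) :=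
    (mem_Zset_sj_iff hjk).mpr (.inr ⟨j, le_rfl, rfl⟩)
  have hwz : wFact k j j ≠ zFact k j := fun h => by simpa [wFact, zFact] using congrFun h 2
  refine catDeg_eq_of_isolated (fun x hx y hy => ?_) hz hw hwz fun y hy hyz => ?_
  · exact (isNChain_wFact_of_mem hjk hx).trans (isNChain_wFact_of_mem hjk hy).symm
  · obtain rfl | ⟨m, hm, rfl⟩ := (mem_Zset_sj_iff hjk).mp hy
    · exact absurd rfl hyz
    · rw [fdist_zFact_wFact hm (by omega)]
      omega
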